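/- Let a, γ, β, λ > 0 and c∞ be real numbers, and define, for ν > γ, Q(ν) = (λ/β) · ( (e^a / ln 2) · ν · E1(a·ν/(ν − γ)) − λ·ν − (γ / ln 2) · E1(a·γ/(ν − γ)) + c∞ ). Then Q is differentiable on (γ, ∞) with derivative Q′(ν) = (λ/β) · ( (e^a / ln 2) · E1(a·ν/(ν − γ)) − λ ). -/

import Mathlib

/-! Since `E1' z = -e^{-z}/z`, the chain rule makes the two `E1'` terms in `Q'` equal, namely
`(γ / ln 2) e^{-aγ/(ν-γ)} / (ν - γ)`, because `e^a e^{-aν/(ν-γ)} = e^{-aγ/(ν-γ)}`;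
so they cancel and only the product-rule term `(e^a / ln 2) E1(aν/(ν-γ))` survives. -/

open MeasureTheory

/-- The exponential integral `E1 z = ∫_z^∞ e^{-t}/t dt`. -/
noncomputable def expIntegralE1 (z : ℝ) : ℝ := ∫ t in Set.Ioi z, Real.exp (-t) / t

lemma integrableOn_exp_neg_div_Ioi {c : ℝ} (hc : 0 < c) :
    IntegrableOn (fun t => Real.exp (-t) / t) (Set.Ioi c) := by
  have hdom : IntegrableOn (fun t => Real.exp (-t) / c) (Set.Ioi c) :=
    (integrableOn_exp_neg_Ioi c).div_const c
  refine Integrable.mono hdom (by fun_prop : Measurable _).aestronglyMeasurable ?_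
  filter_upwards [ae_restrict_mem measurableSet_Ioi] with t (ht : c < t)
  rw [Real.norm_of_nonneg (div_pos (Real.exp_pos _) (hc.trans ht)).le,
    Real.norm_of_nonneg (div_pos (Real.exp_pos _) hc).le]
  exact div_le_div_of_nonneg_left (Real.exp_pos _).le hc ht.le

lemma expIntegralE1_eq_sub_intervalIntegral {c x : ℝ} (hc : 0 < c) (hcx : c ≤ x) :
    expIntegralE1 x = expIntegralE1 c - ∫ t in c..x, Real.exp (-t) / t := by
  have hint := integrableOn_exp_neg_div_Ioi hc
  have hsplit := setIntegral_union Set.Ioc_disjoint_Ioi_same measurableSet_Ioi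
    (hint.mono_set Set.Ioc_subset_Ioi_self) (hint.mono_set (Set.Ioi_subset_Ioi hcx))
  rw [Set.Ioc_union_Ioi_eq_Ioi hcx] at hsplit
  rw [intervalIntegral.integral_of_le hcx, expIntegralE1, expIntegralE1, hsplit]
  ring

lemma hasDerivAt_expIntegralE1 {z : ℝ} (hz : 0 < z) :
    HasDerivAt expIntegralE1 (-(Real.exp (-z) / z)) z := by
  have hc : 0 < z / 2 := by positivity
  have hcz : z / 2 < z := by linarith
  have hii : IntervalIntegrable (fun t => Real.exp (-t) / t) volume (z / 2) z :=
    (intervalIntegrable_iff_integrableOn_Ioc_of_le hcz.le).2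
      ((integrableOn_exp_neg_div_Ioi hc).mono_set Set.Ioc_subset_Ioi_self)
  have hcont : ContinuousAt (fun t => Real.exp (-t) / t) z := by
    fun_prop (disch := exact hz.ne')
  have hmeas : StronglyMeasurableAtFilter (fun t => Real.exp (-t) / t) (nhds z) volume :=
    (by fun_prop : Measurable fun t : ℝ => Real.exp (-t) / t).stronglyMeasurable
      |>.stronglyMeasurableAtFilter
  refine ((intervalIntegral.integral_hasDerivAt_right hii hmeas hcont).const_sub
    (expIntegralE1 (z / 2))).congr_of_eventuallyEq ?_
  filter_upwards [Ioi_mem_nhds hcz] with x (hx : z / 2 < x)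
  exact expIntegralE1_eq_sub_intervalIntegral hc hx.le

lemma hasDerivAt_expIntegralE1_div_sub {b γ ν : ℝ} (hb : 0 < b) (hν : γ < ν) :
    HasDerivAt (fun x => expIntegralE1 (b / (x - γ)))
      (Real.exp (-(b / (ν - γ))) / (ν - γ)) ν := by
  have hw : 0 < ν - γ := sub_pos.2 hν
  have hinner : HasDerivAt (fun x => b / (x - γ)) (-b / (ν - γ) ^ 2) ν :=
    ((hasDerivAt_const ν b).fun_div ((hasDerivAt_id' ν).sub_const γ) hw.ne').congr_deriv
      (by ring)
  refine ((hasDerivAt_expIntegralE1 (div_pos hb hw)).comp ν hinner).congr_deriv ?_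
  field_simp

lemma hasDerivAt_expIntegralE1_mul_div_sub {a γ ν : ℝ} (ha : 0 < a) (hγ : 0 < γ)
    (hν : γ < ν) :
    HasDerivAt (fun x => expIntegralE1 (a * x / (x - γ)))
      (Real.exp (-(a * ν / (ν - γ))) * γ / (ν * (ν - γ))) ν := by
  have hw : 0 < ν - γ := sub_pos.2 hν
  have hν₀ : 0 < ν := hγ.trans hν
  have hinner : HasDerivAt (fun x => a * x / (x - γ)) (-(a * γ) / (ν - γ) ^ 2) ν :=
    (((hasDerivAt_id' ν).const_mul a).fun_div ((hasDerivAt_id' ν).sub_const γ)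
      hw.ne').congr_deriv (by ring)
  have hu : 0 < a * ν / (ν - γ) := by positivity
  refine ((hasDerivAt_expIntegralE1 hu).comp ν hinner).congr_deriv ?_
  field_simp

lemma hasDerivAt_exp_mul_expIntegralE1_sub {a γ ν : ℝ} (ha : 0 < a) (hγ : 0 < γ)
    (hν : γ < ν) :
    HasDerivAt (fun x => Real.exp a * x * expIntegralE1 (a * x / (x - γ))
        - γ * expIntegralE1 (a * γ / (x - γ)))
      (Real.exp a * expIntegralE1 (a * ν / (ν - γ))) ν := by
  have hw : 0 < ν - γ := sub_pos.2 hν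
  have hν₀ : 0 < ν := hγ.trans hν
  have hexp : Real.exp a * Real.exp (-(a * ν / (ν - γ))) = Real.exp (-(a * γ / (ν - γ))) := by
    rw [← Real.exp_add]; congr 1; field_simp; ring
  refine ((((hasDerivAt_id' ν).const_mul (Real.exp a)).mul
    (hasDerivAt_expIntegralE1_mul_div_sub ha hγ hν)).sub
    ((hasDerivAt_expIntegralE1_div_sub (mul_pos ha hγ) hν).const_mul γ)).congr_deriv ?_
  rw [← hexp]
  field_simp
  ring

theorem parametric_queue_hasDerivAt_general (a γ β lam cInf : ℝ)
    (ha : 0 < a) (hγ : 0 < γ)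
    (Q : ℝ → ℝ)
    (hQ : ∀ ν ∈ Set.Ioi γ,
      Q ν = lam / β * (Real.exp a / Real.log 2 * ν * expIntegralE1 (a * ν / (ν - γ))
        - lam * ν - γ / Real.log 2 * expIntegralE1 (a * γ / (ν - γ)) + cInf)) :
    ∀ ν ∈ Set.Ioi γ,
      HasDerivAt Q
        (lam / β * (Real.exp a / Real.log 2 * expIntegralE1 (a * ν / (ν - γ)) - lam)) ν := by
  intro ν (hν : γ < ν)
  have hderiv := ((((hasDerivAt_exp_mul_expIntegralE1_sub ha hγ hν).div_const
    (Real.log 2)).fun_sub ((hasDerivAt_id' ν).const_mul lam)).add_const cInf).const_mul (lam / β)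
  refine (hderiv.congr_deriv (by ring)).congr_of_eventuallyEq ?_
  filter_upwards [Ioi_mem_nhds hν] with x hx
  rw [hQ x hx]
  ring

/-- The parametric queue-length map
`Q(ν) = (λ/β)((e^a/ln 2) ν E1(aν/(ν-γ)) - λν - (γ/ln 2) E1(aγ/(ν-γ)) + c∞)`
is differentiable on `(γ, ∞)` with derivative
`Q′(ν) = (λ/β)((e^a/ln 2) E1(aν/(ν-γ)) - λ)`. -/
theorem parametric_queue_hasDerivAt (a γ β lam cInf : ℝ)
    (ha : 0 < a) (hγ : 0 < γ) (hβ : 0 < β) (hlam : 0 < lam)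
    (Q : ℝ → ℝ)
    (hQ : ∀ ν ∈ Set.Ioi γ,
      Q ν = lam / β * (Real.exp a / Real.log 2 * ν * expIntegralE1 (a * ν / (ν - γ))
        - lam * ν - γ / Real.log 2 * expIntegralE1 (a * γ / (ν - γ)) + cInf)) :
    ∀ ν ∈ Set.Ioi γ,
      HasDerivAt Q
        (lam / β * (Real.exp a / Real.log 2 * expIntegralE1 (a * ν / (ν - γ)) - lam)) ν :=
  parametric_queue_hasDerivAt_general a γ β lam cInf ha hγ Q hQ
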